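/- For every integer n ≥ 1, the map N : ℝ^{n+1} → ℂ^n × ℂ defined by N(x) = ((x_j + 2i·x_0·x_j)_{j=1}^n, ‖x‖² − i·x_0) is injective, its Fréchet derivative DN_x is injective at every x, and for all x, v, w ∈ ℝ^{n+1} one has ω(DN_x v, DN_x w) = 0, where ℂ^n × ℂ is identified with ℂ^{n+1} and ω is the standard symplectic form. Moreover the real part of the second-factor component of N(x) equals ‖x‖², so the level set {x : Re(pr₂(N(x))) = t} is empty for t < 0 and equals the sphere S^n_{√t} for t > 0, on which the first-factor component of N agrees with the Whitney sphere parameterization. (The Whitney sphere bounds an embedded Lagrangian disk in ℂ^{n+1}.) -/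

import Mathlib

open scoped BigOperators

/-- Standard symplectic form on `ℂ^N`: `ω(u, v) = Im (∑ conj (u j) * v j)`. -/
noncomputable def stdSymp (N : ℕ) (u v : Fin N → ℂ) : ℝ :=
  (∑ j, (starRingEnd ℂ) (u j) * v j).im

/-- Standard symplectic form on `ℂ^n × ℂ`, identified with `ℂ^{n+1}` coordinatewise. -/
noncomputable def sympPC (n : ℕ) (u v : (Fin n → ℂ) × ℂ) : ℝ :=
  stdSymp n u.1 v.1 + ((starRingEnd ℂ) u.2 * v.2).im

/-- The Whitney sphere parameterization `W : ℝ^{n+1} → ℂ^n`,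
`W(x)_j = x_j + 2i·x_0·x_j` for `1 ≤ j ≤ n`. -/
noncomputable def whitney (n : ℕ) (x : EuclideanSpace ℝ (Fin (n + 1))) : Fin n → ℂ :=
  fun j => (x j.succ : ℂ) + 2 * Complex.I * (x 0 : ℂ) * (x j.succ : ℂ)

/-- The null-cobordism of the Whitney sphere,
`N(x) = ((x_j + 2i·x_0·x_j)_{j=1}^n, ‖x‖² − i·x_0)`. -/
noncomputable def nullCob (n : ℕ) (x : EuclideanSpace ℝ (Fin (n + 1))) : (Fin n → ℂ) × ℂ :=
  (fun j => (x j.succ : ℂ) + 2 * Complex.I * (x 0 : ℂ) * (x j.succ : ℂ),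
   ((‖x‖ ^ 2 : ℝ) : ℂ) - Complex.I * (x 0 : ℂ))

/-!
The real parts of the first component and the imaginary part of the second component of `N`
read off the coordinates `x_1, …, x_n` and `-x_0`; the same holds for `DN_x v` with `v` in
place of `x`, so `N` and every `DN_x` are injective. Isotropy is a direct computation:
`DN_x v = ((1 + 2i x_0) v_j + 2i v_0 x_j, 2⟪x, v⟫ - i v_0)`, and the contributions
`2 (w_0 ⟪x', v'⟫ - v_0 ⟪x', w'⟫)` of the first factor (primes dropping the 0-th coordinate)
cancel those of the second.
-/

open Complex

section LevelSets

variable {E : Type*} [NormedAddCommGroup E]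

lemma setOf_norm_sq_eq_of_neg {t : ℝ} (ht : t < 0) : {x : E | ‖x‖ ^ 2 = t} = ∅ :=
  Set.eq_empty_of_forall_notMem fun x hx => (sq_nonneg ‖x‖).not_gt (hx.symm ▸ ht)

lemma setOf_norm_sq_eq_of_nonneg {t : ℝ} (ht : 0 ≤ t) :
    {x : E | ‖x‖ ^ 2 = t} = Metric.sphere 0 (Real.sqrt t) := by
  ext x
  rw [Set.mem_ofPred_eq, mem_sphere_zero_iff_norm, ← Real.sqrt_inj (sq_nonneg _) ht,
    Real.sqrt_sq (norm_nonneg x)]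

end LevelSets

namespace EuclideanSpace

variable {n : ℕ}

lemma ext_fin_succ {x y : EuclideanSpace ℝ (Fin (n + 1))} (h0 : x 0 = y 0)
    (hsucc : ∀ j : Fin n, x j.succ = y j.succ) : x = y := by
  ext k
  exact Fin.cases h0 hsucc k

lemma inner_eq_fin_succ (x y : EuclideanSpace ℝ (Fin (n + 1))) :
    inner ℝ x y = x 0 * y 0 + ∑ j : Fin n, x j.succ * y j.succ := by
  simp [PiLp.inner_apply, Fin.sum_univ_succ, mul_comm]

end EuclideanSpace

variable {n : ℕ}

lemma injective_of_re_fst_of_im_snd {f : EuclideanSpace ℝ (Fin (n + 1)) → (Fin n → ℂ) × ℂ}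
    (hre : ∀ x j, ((f x).1 j).re = x j.succ) (him : ∀ x, (f x).2.im = -x 0) :
    Function.Injective f := by
  intro x y h
  refine EuclideanSpace.ext_fin_succ ?_ fun j => ?_
  · simpa [him] using congrArg (fun p => p.2.im) h
  · simpa [hre] using congrArg (fun p => (p.1 j).re) h

lemma nullCob_fst (x : EuclideanSpace ℝ (Fin (n + 1))) : (nullCob n x).1 = whitney n x := rfl

lemma re_nullCob_fst (x : EuclideanSpace ℝ (Fin (n + 1))) (j : Fin n) :
    ((nullCob n x).1 j).re = x j.succ := by
  simp [nullCob]

lemma re_nullCob_snd (x : EuclideanSpace ℝ (Fin (n + 1))) : (nullCob n x).2.re = ‖x‖ ^ 2 := by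
  simp [nullCob, sq]

lemma im_nullCob_snd (x : EuclideanSpace ℝ (Fin (n + 1))) : (nullCob n x).2.im = -x 0 := by
  simp [nullCob, sq]

lemma nullCob_injective : Function.Injective (nullCob n) :=
  injective_of_re_fst_of_im_snd re_nullCob_fst im_nullCob_snd

lemma fderiv_nullCob_apply (x v : EuclideanSpace ℝ (Fin (n + 1))) :
    fderiv ℝ (nullCob n) x v =
      (fun j => (1 + 2 * I * x 0) * v j.succ + 2 * I * v 0 * x j.succ,
       ((2 * inner ℝ x v : ℝ) : ℂ) - I * v 0) := by
  have hcoord (k : Fin (n + 1)) :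
      HasFDerivAt (fun y : EuclideanSpace ℝ (Fin (n + 1)) => (y k : ℂ))
        (ofRealCLM.comp (EuclideanSpace.proj k)) x :=
    (ofRealCLM.comp (EuclideanSpace.proj k)).hasFDerivAt
  have hfst := hasFDerivAt_pi.2 fun j : Fin n =>
    (hcoord j.succ).add (((hcoord 0).const_mul (2 * I)).mul (hcoord j.succ))
  have hsnd := (ofRealCLM.hasFDerivAt.comp x (hasStrictFDerivAt_norm_sq x).hasFDerivAt).sub
    ((hcoord 0).const_mul I)
  have hN : HasFDerivAt (nullCob n) _ x := hfst.prodMk hsnd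
  rw [hN.fderiv]
  refine Prod.ext (funext fun j => ?_) ?_
  · simp only [ContinuousLinearMap.prod_apply, ContinuousLinearMap.coe_pi', add_apply,
      ContinuousLinearMap.comp_apply, PiLp.proj_apply, ofRealCLM_apply, smul_apply, smul_eq_mul]
    ring
  · simp only [ContinuousLinearMap.prod_apply, sub_apply, two_smul, ContinuousLinearMap.comp_add,
      add_apply, ContinuousLinearMap.comp_apply, PiLp.proj_apply, ofRealCLM_apply, smul_apply,
      smul_eq_mul, coe_innerSL_apply, ofReal_mul, ofReal_ofNat]
    ring

lemma fderiv_nullCob_injective (x : EuclideanSpace ℝ (Fin (n + 1))) :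
    Function.Injective (fderiv ℝ (nullCob n) x) :=
  injective_of_re_fst_of_im_snd (fun v j => by simp [fderiv_nullCob_apply])
    (fun v => by simp [fderiv_nullCob_apply])

lemma sympPC_fderiv_nullCob (x v w : EuclideanSpace ℝ (Fin (n + 1))) :
    sympPC n (fderiv ℝ (nullCob n) x v) (fderiv ℝ (nullCob n) x w) = 0 := by
  have hfst (j : Fin n) :
      (starRingEnd ℂ ((1 + 2 * I * x 0) * v j.succ + 2 * I * v 0 * x j.succ) *
        ((1 + 2 * I * x 0) * w j.succ + 2 * I * w 0 * x j.succ)).im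
        = 2 * w 0 * (x j.succ * v j.succ) - 2 * v 0 * (x j.succ * w j.succ) := by
    simp only [map_add, map_mul, map_one, conj_I, conj_ofReal, conj_ofNat, mul_im, mul_re, add_re,
      add_im, neg_re, neg_im, one_re, one_im, I_re, I_im, ofReal_re, ofReal_im, re_ofNat, im_ofNat]
    ring
  have hsnd : (starRingEnd ℂ (((2 * inner ℝ x v : ℝ) : ℂ) - I * v 0) *
      (((2 * inner ℝ x w : ℝ) : ℂ) - I * w 0)).im
        = -(2 * inner ℝ x v) * w 0 + v 0 * (2 * inner ℝ x w) := by
    simp [mul_im, mul_re]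
  simp only [fderiv_nullCob_apply, sympPC, stdSymp, im_sum, hfst, hsnd]
  simp only [EuclideanSpace.inner_eq_fin_succ, Finset.sum_sub_distrib, ← Finset.mul_sum]
  ring

theorem stmt9_general (n : ℕ) :
    Function.Injective (nullCob n) ∧
    (∀ x : EuclideanSpace ℝ (Fin (n + 1)), Function.Injective (fderiv ℝ (nullCob n) x)) ∧
    (∀ x v w : EuclideanSpace ℝ (Fin (n + 1)),
      sympPC n (fderiv ℝ (nullCob n) x v) (fderiv ℝ (nullCob n) x w) = 0) ∧
    (∀ x : EuclideanSpace ℝ (Fin (n + 1)), ((nullCob n x).2).re = ‖x‖ ^ 2) ∧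
    (∀ t : ℝ, t < 0 →
      {x : EuclideanSpace ℝ (Fin (n + 1)) | ((nullCob n x).2).re = t} = ∅) ∧
    (∀ t : ℝ, 0 < t →
      {x : EuclideanSpace ℝ (Fin (n + 1)) | ((nullCob n x).2).re = t} =
        Metric.sphere 0 (Real.sqrt t)) ∧
    (∀ x : EuclideanSpace ℝ (Fin (n + 1)), (nullCob n x).1 = whitney n x) := by
  refine ⟨nullCob_injective, fderiv_nullCob_injective, sympPC_fderiv_nullCob, re_nullCob_snd,
    fun t ht => ?_, fun t ht => ?_, nullCob_fst⟩ <;> simp only [re_nullCob_snd]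
  · exact setOf_norm_sq_eq_of_neg ht
  · exact setOf_norm_sq_eq_of_nonneg ht.le

/-- The Whitney sphere bounds an embedded Lagrangian disk in `ℂ^{n+1}`: the map `N` is
injective, an immersion, and isotropic for the standard symplectic form; the real part of its
second component is `‖x‖²`, so its level set over `t` is empty for `t < 0` and is the sphere
`S^n_{√t}` for `t > 0`, on which the first component of `N` is the Whitney parameterization. -/
theorem stmt9 (n : ℕ) (hn : 1 ≤ n) :
    Function.Injective (nullCob n) ∧
    (∀ x : EuclideanSpace ℝ (Fin (n + 1)), Function.Injective (fderiv ℝ (nullCob n) x)) ∧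
    (∀ x v w : EuclideanSpace ℝ (Fin (n + 1)),
      sympPC n (fderiv ℝ (nullCob n) x v) (fderiv ℝ (nullCob n) x w) = 0) ∧
    (∀ x : EuclideanSpace ℝ (Fin (n + 1)), ((nullCob n x).2).re = ‖x‖ ^ 2) ∧
    (∀ t : ℝ, t < 0 →
      {x : EuclideanSpace ℝ (Fin (n + 1)) | ((nullCob n x).2).re = t} = ∅) ∧
    (∀ t : ℝ, 0 < t →
      {x : EuclideanSpace ℝ (Fin (n + 1)) | ((nullCob n x).2).re = t} =
        Metric.sphere 0 (Real.sqrt t)) ∧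
    (∀ x : EuclideanSpace ℝ (Fin (n + 1)), (nullCob n x).1 = whitney n x) :=
  stmt9_general n
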